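/- arXiv:1801.08283 — 4 statements merged into one kernel-verified Lean document; each statement's English description precedes it below -/
import Mathlib

section
/- For every q with q = 0 or q > 5 there exists a constant C_q > 0, depending only on q, such that for every measurable f : ℝ³ → [0,∞) with ‖f‖_{L∞_q} < ∞, ∫_{ℝ³}(1+|v|²) f(v) dv < ∞, ρ_f > 0 and T_f > 0, the local Maxwellian satisfies ‖𝓜(f)‖_{L∞_q} ≤ C_q ‖f‖_{L∞_q}, i.e. sup_v (1+|v|^q) 𝓜(f)(v) ≤ C_q · ess sup_v (1+|v|^q) f(v). -/
open MeasureTheory Real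
open scoped ENNReal

noncomputable section

/-- Velocity space `ℝ³`. -/
abbrev E3 : Type := EuclideanSpace ℝ (Fin 3)

/-- Local density `ρ_f = ∫ f dv`. -/
def dens (f : E3 → ℝ) : ℝ := ∫ v, f v

/-- Bulk velocity `U_f`, defined by `ρ_f U_f = ∫ v f dv`. -/
def bulk (f : E3 → ℝ) : E3 := (dens f)⁻¹ • (∫ v, f v • v)

/-- Temperature `T_f`, defined by `3 ρ_f T_f = ∫ |v - U_f|² f dv`. -/
def temp (f : E3 → ℝ) : ℝ := (3 * dens f)⁻¹ * ∫ v, ‖v - bulk f‖ ^ 2 * f v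

/-- The local Maxwellian `𝓜(f)(v) = ρ_f (2π T_f)^{-3/2} exp(-|v - U_f|²/(2 T_f))`. -/
def maxw (f : E3 → ℝ) : E3 → ℝ := fun v =>
  dens f * (2 * π * temp f) ^ (-(3 : ℝ) / 2) * Real.exp (-‖v - bulk f‖ ^ 2 / (2 * temp f))

/-- Weighted norm `‖f‖_{L∞_q} = ess sup_v (1 + |v|^q) f(v)` (as a value in `ℝ≥0∞`). -/
def wnorm (q : ℝ) (f : E3 → ℝ) : ℝ≥0∞ :=
  essSup (fun v => ENNReal.ofReal ((1 + ‖v‖ ^ q) * f v)) volume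


/-!
Write `A = 𝓜(f)(U) = ρ (2πT)^{-3/2}` for the height of the Maxwellian and `N = ‖f‖_{L∞_q}`.
Chebyshev's inequality for the second moment about `U` puts half of the mass of `f` in the ball
`B(U, √(6T))`, where `f ≤ N`; hence `ρ ≲ N T^{3/2}`, i.e. `A ≲ N`, which is the case `q = 0`.
For `q > 5`, splitting `3ρT ≤ ∫ |v|² f` at radius `√(2T)` and using `f ≤ N |v|^{-q}` outside
gives `ρ T ≲ N T^{(5-q)/2}`, i.e. `A T^{q/2} ≲ N`. Finally `|v|^q ≲ |v - U|^q + |U|^q`: the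
Gaussian absorbs `|v - U|^q` at the cost of `T^{q/2}`, and `|U|^q A` is controlled by the previous
bound when `|U|² ≲ T`, and otherwise by the Chebyshev argument again, since on the ball, which
stays away from the origin, `f ≤ 2^q N |U|^{-q}`.
-/

open Metric Set Filter Module

lemma rpow_mul_exp_neg_le {a y : ℝ} (ha : 0 < a) (hy : 0 ≤ y) :
    y ^ a * exp (-y) ≤ (a * exp (-1)) ^ a := by
  have hexp : exp (-y) = exp (-(y / a)) ^ a := by
    rw [← Real.exp_mul]; congr 1; field_simp
  have hya : y * exp (-(y / a)) = a * ((y / a) * exp (-(y / a))) := by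
    field_simp
  rw [hexp, ← Real.mul_rpow hy (exp_pos _).le, hya]
  gcongr
  exact mul_exp_neg_le_exp_neg_one _

lemma rpow_mul_exp_neg_sq_div_le {q s x : ℝ} (hq : 0 < q) (hs : 0 < s) (hx : 0 ≤ x) :
    x ^ q * exp (-x ^ 2 / s) ≤ (q / 2 * exp (-1)) ^ (q / 2) * s ^ (q / 2) := by
  have hxq : x ^ q = (x ^ 2 / s) ^ (q / 2) * s ^ (q / 2) := by
    rw [← Real.mul_rpow (by positivity) hs.le, div_mul_cancel₀ _ hs.ne', ← Real.rpow_natCast,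
      ← Real.rpow_mul hx]
    ring_nf
  rw [hxq, mul_right_comm, neg_div]
  gcongr
  exact rpow_mul_exp_neg_le (by positivity) (by positivity)

lemma norm_add_rpow_le {E : Type*} [SeminormedAddCommGroup E] (u w : E) {p : ℝ} (hp : 1 ≤ p) :
    ‖u + w‖ ^ p ≤ 2 ^ (p - 1) * (‖u‖ ^ p + ‖w‖ ^ p) := by
  calc ‖u + w‖ ^ p ≤ (‖u‖ + ‖w‖) ^ p := by gcongr; exact norm_add_le u w
    _ ≤ 2 ^ (p - 1) * (‖u‖ ^ p + ‖w‖ ^ p) := by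
      exact_mod_cast NNReal.rpow_add_le_mul_rpow_add_rpow ‖u‖₊ ‖w‖₊ hp

lemma integral_le_mul_measureReal_ball_add {E : Type*} [SeminormedAddCommGroup E]
    [MeasurableSpace E] [OpensMeasurableSpace E] [ProperSpace E] {μ : Measure E}
    [IsFiniteMeasureOnCompacts μ] {f : E → ℝ} {c : E} {R B : ℝ} (hf0 : 0 ≤ᵐ[μ] f)
    (hf : Integrable f μ) (hf2 : Integrable (fun v => ‖v - c‖ ^ 2 * f v) μ) (hR : 0 < R)
    (hB : ∀ᵐ v ∂μ, v ∈ ball c R → f v ≤ B) :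
    ∫ v, f v ∂μ ≤ B * μ.real (ball c R) + (∫ v, ‖v - c‖ ^ 2 * f v ∂μ) / R ^ 2 := by
  rw [← integral_add_compl measurableSet_ball hf]
  gcongr
  · calc ∫ v in ball c R, f v ∂μ ≤ ∫ _ in ball c R, B ∂μ :=
          integral_mono_of_nonneg (ae_restrict_of_ae hf0)
            (integrableOn_const measure_ball_lt_top.ne) ((ae_restrict_iff' measurableSet_ball).2 hB)
      _ = B * μ.real (ball c R) := by rw [setIntegral_const, smul_eq_mul, mul_comm]
  · calc ∫ v in (ball c R)ᶜ, f v ∂μ ≤ ∫ v in (ball c R)ᶜ, ‖v - c‖ ^ 2 * f v / R ^ 2 ∂μ := by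
          refine integral_mono_of_nonneg (ae_restrict_of_ae hf0) (hf2.div_const _).integrableOn ?_
          filter_upwards [ae_restrict_mem measurableSet_ball.compl, ae_restrict_of_ae hf0]
            with v hv hfv
          have hRv : R ≤ ‖v - c‖ := by simpa [dist_eq_norm] using hv
          rw [le_div_iff₀ (by positivity), mul_comm]
          gcongr
      _ ≤ (∫ v, ‖v - c‖ ^ 2 * f v ∂μ) / R ^ 2 := by
          rw [integral_div]
          exact div_le_div_of_nonneg_right
            (setIntegral_le_integral hf2 (hf0.mono fun v hv => mul_nonneg (sq_nonneg _) hv))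
            (by positivity)

lemma indicator_compl_closedBall_comp_norm {E : Type*} [SeminormedAddCommGroup E] (S : ℝ)
    (g : ℝ → ℝ) :
    (closedBall (0 : E) S)ᶜ.indicator (fun v => g ‖v‖) = fun v => (Ioi S).indicator g ‖v‖ := by
  ext v
  by_cases h : S < ‖v‖ <;> simp [indicator, h]

section Radial

lemma eqOn_pow_smul_indicator_rpow {d : ℕ} (hd : 0 < d) (S p : ℝ) :
    EqOn (fun r : ℝ => r ^ (d - 1) • (Ioi S).indicator (fun r => r ^ (-p)) r)
      ((Ioi S).indicator fun r => r ^ ((d : ℝ) - 1 - p)) (Ioi 0) := by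
  intro r (hr : 0 < r)
  by_cases h : S < r
  · simp only [indicator_of_mem (show r ∈ Ioi S from h), smul_eq_mul]
    rw [sub_sub, Real.rpow_sub hr, Real.rpow_add hr, ← Real.rpow_natCast, Real.rpow_neg hr.le,
      Nat.cast_sub hd, Real.rpow_sub hr, Nat.cast_one, Real.rpow_one]
    field_simp
  · simp [indicator_of_notMem (show r ∉ Ioi S from h)]

variable {E : Type*} [NormedAddCommGroup E] [NormedSpace ℝ E] [FiniteDimensional ℝ E]
  [MeasurableSpace E] [BorelSpace E] [Nontrivial E] (μ : Measure E) [μ.IsAddHaarMeasure]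
  {p S : ℝ}

lemma integrableOn_compl_closedBall_rpow_neg (hp : finrank ℝ E < p) (hS : 0 < S) :
    IntegrableOn (fun v : E => ‖v‖ ^ (-p)) (closedBall 0 S)ᶜ μ := by
  rw [← integrable_indicator_iff measurableSet_closedBall.compl,
    indicator_compl_closedBall_comp_norm S fun r => r ^ (-p), integrable_fun_norm_addHaar μ,
    integrableOn_congr_fun (eqOn_pow_smul_indicator_rpow finrank_pos S p) measurableSet_Ioi]
  exact ((integrableOn_Ioi_rpow_of_lt (by linarith) hS).integrable_indicator
    measurableSet_Ioi).integrableOn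

lemma setIntegral_compl_closedBall_rpow_neg (hp : finrank ℝ E < p) (hS : 0 < S) :
    ∫ v in (closedBall 0 S)ᶜ, ‖v‖ ^ (-p) ∂μ =
      finrank ℝ E * μ.real (ball 0 1) * (S ^ (finrank ℝ E - p) / (p - finrank ℝ E)) := by
  rw [← integral_indicator measurableSet_closedBall.compl,
    indicator_compl_closedBall_comp_norm S fun r => r ^ (-p), integral_fun_norm_addHaar μ,
    setIntegral_congr_fun measurableSet_Ioi (eqOn_pow_smul_indicator_rpow finrank_pos S p),
    setIntegral_indicator measurableSet_Ioi, Ioi_inter_Ioi, max_eq_right hS.le,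
    integral_Ioi_rpow_of_lt (by linarith) hS, nsmul_eq_mul, smul_eq_mul, mul_assoc]
  congr 2
  rw [show (finrank ℝ E : ℝ) - 1 - p + 1 = finrank ℝ E - p by ring, neg_div, ← div_neg, neg_sub]

end Radial

lemma integrable_smul_of_norm_le_mul_one_add_sq {E F : Type*} [SeminormedAddCommGroup E]
    [MeasurableSpace E] [NormedAddCommGroup F] [NormedSpace ℝ F] {μ : Measure E} {f : E → ℝ}
    {g : E → F} {C : ℝ} (hI : Integrable (fun v => (1 + ‖v‖ ^ 2) * f v) μ)
    (hf0 : ∀ v, 0 ≤ f v) (hf : AEStronglyMeasurable f μ) (hg : AEStronglyMeasurable g μ)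
    (hgC : ∀ v, ‖g v‖ ≤ C * (1 + ‖v‖ ^ 2)) : Integrable (fun v => f v • g v) μ := by
  refine (hI.const_mul C).mono' (hf.smul hg) (ae_of_all _ fun v => ?_)
  calc ‖f v • g v‖ = f v * ‖g v‖ := by rw [norm_smul, Real.norm_of_nonneg (hf0 v)]
    _ ≤ f v * (C * (1 + ‖v‖ ^ 2)) := mul_le_mul_of_nonneg_left (hgC v) (hf0 v)
    _ = C * ((1 + ‖v‖ ^ 2) * f v) := by ring

lemma integral_norm_sub_sq_mul_eq {E : Type*} [NormedAddCommGroup E] [InnerProductSpace ℝ E]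
    [CompleteSpace E] [MeasurableSpace E] {μ : Measure E} {f : E → ℝ} {U : E}
    (hf : Integrable f μ) (hf1 : Integrable (fun v => f v • v) μ)
    (hf2 : Integrable (fun v => ‖v‖ ^ 2 * f v) μ) (hU : ∫ v, f v • v ∂μ = (∫ v, f v ∂μ) • U) :
    ∫ v, ‖v - U‖ ^ 2 * f v ∂μ = ∫ v, ‖v‖ ^ 2 * f v ∂μ - (∫ v, f v ∂μ) * ‖U‖ ^ 2 := by
  have hexpand : (fun v => ‖v - U‖ ^ 2 * f v) =
      fun v => ‖v‖ ^ 2 * f v - 2 * inner ℝ U (f v • v) + ‖U‖ ^ 2 * f v := by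
    ext v
    rw [norm_sub_sq_real, inner_smul_right, real_inner_comm]
    ring
  have hinner : ∫ v, inner ℝ U (f v • v) ∂μ = (∫ v, f v ∂μ) * ‖U‖ ^ 2 := by
    rw [integral_inner hf1, hU, inner_smul_right, real_inner_self_eq_norm_sq]
  have hinner_int : Integrable (fun v => 2 * inner ℝ U (f v • v)) μ :=
    (hf1.const_inner U).const_mul 2
  have hsub : Integrable (fun v => ‖v‖ ^ 2 * f v - 2 * inner ℝ U (f v • v)) μ :=
    hf2.sub hinner_int
  rw [hexpand, integral_add hsub (hf.const_mul _), integral_sub hf2 hinner_int,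
    integral_const_mul, integral_const_mul, hinner]
  ring

lemma measureReal_ball_E3 (c : E3) {R : ℝ} (hR : 0 ≤ R) :
    volume.real (ball c R) = 4 * π / 3 * R ^ 3 := by
  rw [Measure.real, EuclideanSpace.volume_ball_fin_three, ENNReal.toReal_mul, ENNReal.toReal_pow,
    ENNReal.toReal_ofReal hR, ENNReal.toReal_ofReal (by positivity)]
  ring

section Maxwellian

variable {f : E3 → ℝ}

lemma integrable_of_integrable_one_add_sq_mul (hm : Measurable f) (h0 : ∀ v, 0 ≤ f v)
    (hI : Integrable fun v => (1 + ‖v‖ ^ 2) * f v) : Integrable f := by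
  simpa using integrable_smul_of_norm_le_mul_one_add_sq (g := fun _ => (1 : ℝ)) (C := 1) hI h0
    hm.aestronglyMeasurable aestronglyMeasurable_const fun v => by simp

lemma integrable_smul_self (hm : Measurable f) (h0 : ∀ v, 0 ≤ f v)
    (hI : Integrable fun v => (1 + ‖v‖ ^ 2) * f v) : Integrable fun v => f v • v :=
  integrable_smul_of_norm_le_mul_one_add_sq (C := 1) hI h0 hm.aestronglyMeasurable
    aestronglyMeasurable_id fun v => by nlinarith [sq_nonneg (‖v‖ - 1)]

lemma integrable_norm_sub_sq_mul (hm : Measurable f) (h0 : ∀ v, 0 ≤ f v)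
    (hI : Integrable fun v => (1 + ‖v‖ ^ 2) * f v) (c : E3) :
    Integrable fun v => ‖v - c‖ ^ 2 * f v := by
  have hbound (v : E3) : ‖‖v - c‖ ^ 2‖ ≤ (2 + 2 * ‖c‖ ^ 2) * (1 + ‖v‖ ^ 2) := by
    rw [norm_pow, norm_norm]
    nlinarith [norm_sub_le v c, norm_nonneg (v - c), norm_nonneg c, sq_nonneg (‖v‖ - ‖c‖),
      mul_nonneg (sq_nonneg ‖v‖) (sq_nonneg ‖c‖)]
  simpa [mul_comm] using integrable_smul_of_norm_le_mul_one_add_sq hI h0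
    hm.aestronglyMeasurable (by fun_prop) hbound

lemma dens_smul_bulk (hρ : dens f ≠ 0) : dens f • bulk f = ∫ v, f v • v := by
  rw [bulk, smul_inv_smul₀ hρ]

lemma integral_norm_sub_bulk_sq_mul (hρ : dens f ≠ 0) :
    ∫ v, ‖v - bulk f‖ ^ 2 * f v = 3 * dens f * temp f := by
  rw [temp, mul_inv_cancel_left₀ (by positivity)]

lemma three_mul_dens_mul_temp_le (hm : Measurable f) (h0 : ∀ v, 0 ≤ f v)
    (hI : Integrable fun v => (1 + ‖v‖ ^ 2) * f v) (hρ : 0 < dens f) :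
    3 * dens f * temp f ≤ ∫ v, ‖v‖ ^ 2 * f v := by
  rw [← integral_norm_sub_bulk_sq_mul hρ.ne',
    integral_norm_sub_sq_mul_eq (integrable_of_integrable_one_add_sq_mul hm h0 hI)
      (integrable_smul_self hm h0 hI) (by simpa using integrable_norm_sub_sq_mul hm h0 hI 0)
      (dens_smul_bulk hρ.ne').symm]
  have : 0 ≤ dens f * ‖bulk f‖ ^ 2 := by positivity
  unfold dens at this
  linarith

lemma maxw_eq_mul_exp (v : E3) :
    maxw f v = maxw f (bulk f) * exp (-‖v - bulk f‖ ^ 2 / (2 * temp f)) := by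
  simp [maxw]

lemma maxw_bulk (hT : 0 < temp f) :
    maxw f (bulk f) = dens f / (2 * π * temp f) ^ ((3 : ℝ) / 2) := by
  rw [maxw, sub_self, norm_zero, neg_div, Real.rpow_neg (by positivity)]
  simp [div_eq_mul_inv]

lemma maxw_le_maxw_bulk (hρ : 0 < dens f) (hT : 0 < temp f) (v : E3) :
    maxw f v ≤ maxw f (bulk f) := by
  rw [maxw_eq_mul_exp v]
  refine mul_le_of_le_one_right (by rw [maxw_bulk hT]; positivity) (exp_le_one_iff.2 ?_)
  exact div_nonpos_of_nonpos_of_nonneg (by simp) (by positivity)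

lemma maxw_bulk_le_of_ae_le_on_ball (hm : Measurable f) (h0 : ∀ v, 0 ≤ f v)
    (hI : Integrable fun v => (1 + ‖v‖ ^ 2) * f v) (hρ : 0 < dens f) (hT : 0 < temp f) {B : ℝ}
    (hB : ∀ᵐ v, v ∈ ball (bulk f) √(6 * temp f) → f v ≤ B) :
    maxw f (bulk f) ≤ 8 * √(3 / π) * B := by
  set R := √(6 * temp f)
  have hR : 0 < R := by positivity
  have hcut := integral_le_mul_measureReal_ball_add (ae_of_all _ h0)
    (integrable_of_integrable_one_add_sq_mul hm h0 hI) (integrable_norm_sub_sq_mul hm h0 hI _) hR hB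
  rw [integral_norm_sub_bulk_sq_mul hρ.ne', measureReal_ball_E3 _ hR.le,
    Real.sq_sqrt (by positivity)] at hcut
  -- the radius `√(6T)` makes the Chebyshev tail `3ρT / R²` equal to `ρ / 2`
  have hdens : dens f ≤ 8 * π / 3 * R ^ 3 * B := by
    have : 3 * dens f * temp f / (6 * temp f) = dens f / 2 := by field_simp; ring
    rw [this] at hcut
    change dens f ≤ _ at hcut
    linarith
  have hscale : R ^ 3 / (2 * π * temp f) ^ ((3 : ℝ) / 2) = 3 / π * √(3 / π) := by
    have hD : (2 * π * temp f) ^ ((3 : ℝ) / 2) = √(2 * π * temp f) ^ 3 := by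
      rw [Real.sqrt_eq_rpow, ← Real.rpow_natCast, ← Real.rpow_mul (by positivity)]
      norm_num
    have h3π : 6 * temp f / (2 * π * temp f) = 3 / π := by field_simp; ring
    rw [hD, ← div_pow, ← Real.sqrt_div' _ (by positivity), h3π, pow_succ,
      Real.sq_sqrt (by positivity)]
  calc maxw f (bulk f) ≤ 8 * π / 3 * R ^ 3 * B / (2 * π * temp f) ^ ((3 : ℝ) / 2) := by
        rw [maxw_bulk hT]; gcongr
    _ = 8 * π / 3 * B * (R ^ 3 / (2 * π * temp f) ^ ((3 : ℝ) / 2)) := by ring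
    _ = 8 * √(3 / π) * B := by rw [hscale]; field_simp

lemma maxw_le_of_ae_le (hm : Measurable f) (h0 : ∀ v, 0 ≤ f v)
    (hI : Integrable fun v => (1 + ‖v‖ ^ 2) * f v) (hρ : 0 < dens f) (hT : 0 < temp f) {B : ℝ}
    (hB : ∀ᵐ v, f v ≤ B) (v : E3) : maxw f v ≤ 8 * √(3 / π) * B :=
  (maxw_le_maxw_bulk hρ hT v).trans
    (maxw_bulk_le_of_ae_le_on_ball hm h0 hI hρ hT (hB.mono fun _ h _ => h))

lemma dens_mul_temp_le {q : ℝ} (hq : 5 < q) (hm : Measurable f) (h0 : ∀ v, 0 ≤ f v)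
    (hI : Integrable fun v => (1 + ‖v‖ ^ 2) * f v) (hρ : 0 < dens f) (hT : 0 < temp f) {N : ℝ}
    (hN : ∀ᵐ v, ‖v‖ ^ q * f v ≤ N) :
    dens f * temp f ≤ 4 * π / (q - 5) * (2 * temp f) ^ ((5 - q) / 2) * N := by
  set S := √(2 * temp f) with hSdef
  have hS : 0 < S := by positivity
  have hf := integrable_of_integrable_one_add_sq_mul hm h0 hI
  have hf2 : Integrable fun v => ‖v‖ ^ 2 * f v := by
    simpa using integrable_norm_sub_sq_mul hm h0 hI 0
  have hinner : ∫ v in closedBall (0 : E3) S, ‖v‖ ^ 2 * f v ≤ 2 * temp f * dens f := by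
    calc ∫ v in closedBall (0 : E3) S, ‖v‖ ^ 2 * f v
        ≤ ∫ v in closedBall (0 : E3) S, S ^ 2 * f v := by
          refine setIntegral_mono_on hf2.integrableOn (hf.const_mul _).integrableOn
            measurableSet_closedBall fun v hv => ?_
          have : ‖v‖ ≤ S := by simpa using hv
          gcongr
          exact h0 v
      _ ≤ S ^ 2 * dens f := by
          rw [integral_const_mul]
          gcongr
          exact setIntegral_le_integral hf (ae_of_all _ h0)
      _ = 2 * temp f * dens f := by rw [Real.sq_sqrt (by positivity)]
  have hq2 : (finrank ℝ E3 : ℝ) < q - 2 := by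
    rw [finrank_euclideanSpace_fin]; push_cast; linarith
  have houter : ∫ v in (closedBall (0 : E3) S)ᶜ, ‖v‖ ^ 2 * f v ≤
      N * (4 * π / (q - 5) * (2 * temp f) ^ ((5 - q) / 2)) := by
    calc ∫ v in (closedBall (0 : E3) S)ᶜ, ‖v‖ ^ 2 * f v
        ≤ ∫ v in (closedBall (0 : E3) S)ᶜ, N * ‖v‖ ^ (-(q - 2)) := by
          refine integral_mono_of_nonneg (ae_of_all _ fun v => by have := h0 v; positivity)
            ((integrableOn_compl_closedBall_rpow_neg volume hq2 hS).const_mul N) ?_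
          filter_upwards [ae_restrict_mem measurableSet_closedBall.compl, ae_restrict_of_ae hN]
            with v hv hNv
          have hv0 : 0 < ‖v‖ := hS.trans (by simpa using hv)
          rw [neg_sub, Real.rpow_sub hv0, Real.rpow_two, mul_div, le_div_iff₀ (by positivity)]
          nlinarith [sq_nonneg ‖v‖]
      _ = N * (4 * π / (q - 5) * (2 * temp f) ^ ((5 - q) / 2)) := by
          rw [integral_const_mul, setIntegral_compl_closedBall_rpow_neg volume hq2 hS]
          have hSq : S ^ ((3 : ℝ) - (q - 2)) = (2 * temp f) ^ ((5 - q) / 2) := by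
            rw [hSdef, Real.sqrt_eq_rpow, ← Real.rpow_mul (by positivity)]
            ring_nf
          rw [finrank_euclideanSpace_fin, measureReal_ball_E3 _ zero_le_one]
          push_cast
          rw [hSq]
          field_simp
          ring
  have hsplit := integral_add_compl (s := closedBall (0 : E3) S) measurableSet_closedBall hf2
  have hmom := three_mul_dens_mul_temp_le hm h0 hI hρ
  linarith

lemma maxw_bulk_mul_rpow_le {q : ℝ} (hq : 5 < q) (hm : Measurable f) (h0 : ∀ v, 0 ≤ f v)
    (hI : Integrable fun v => (1 + ‖v‖ ^ 2) * f v) (hρ : 0 < dens f) (hT : 0 < temp f) {N : ℝ}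
    (hN : ∀ᵐ v, ‖v‖ ^ q * f v ≤ N) :
    maxw f (bulk f) * (2 * temp f) ^ (q / 2) ≤ 8 / ((q - 5) * √π) * N := by
  set s := 2 * temp f with hs
  have hs0 : 0 < s := by positivity
  have hπ : π ^ ((3 : ℝ) / 2) = π * √π := by
    rw [Real.sqrt_eq_rpow, ← Real.rpow_one_add' pi_pos.le (by norm_num)]
    norm_num
  have hsplit : s ^ (q / 2) = s * s ^ ((3 : ℝ) / 2) * s ^ ((q - 5) / 2) := by
    rw [← Real.rpow_one_add' hs0.le (by norm_num), ← Real.rpow_add hs0]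
    ring_nf
  have hcancel : s ^ ((5 - q) / 2) * s ^ ((q - 5) / 2) = 1 := by
    rw [← Real.rpow_add hs0]; ring_nf; exact Real.rpow_zero s
  have heq : maxw f (bulk f) * s ^ (q / 2) =
      2 * (dens f * temp f) * s ^ ((q - 5) / 2) / π ^ ((3 : ℝ) / 2) := by
    rw [maxw_bulk hT, show 2 * π * temp f = π * s by ring, Real.mul_rpow pi_pos.le hs0.le, hsplit]
    field_simp
    exact hs
  have hq5 : 0 < q - 5 := by linarith
  calc maxw f (bulk f) * s ^ (q / 2)
      ≤ 2 * (4 * π / (q - 5) * s ^ ((5 - q) / 2) * N) * s ^ ((q - 5) / 2) /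
          π ^ ((3 : ℝ) / 2) := by
        rw [heq]; gcongr 2 * ?_ * _ / _; exact dens_mul_temp_le hq hm h0 hI hρ hT hN
    _ = 8 / ((q - 5) * √π) * N * (s ^ ((5 - q) / 2) * s ^ ((q - 5) / 2)) := by
        rw [hπ]; field_simp; ring
    _ = 8 / ((q - 5) * √π) * N := by rw [hcancel, mul_one]

lemma norm_bulk_rpow_mul_maxw_bulk_le {q : ℝ} (hq : 5 < q) (hm : Measurable f)
    (h0 : ∀ v, 0 ≤ f v) (hI : Integrable fun v => (1 + ‖v‖ ^ 2) * f v) (hρ : 0 < dens f)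
    (hT : 0 < temp f) {N : ℝ} (hN : ∀ᵐ v, ‖v‖ ^ q * f v ≤ N) :
    ‖bulk f‖ ^ q * maxw f (bulk f) ≤
      (12 ^ (q / 2) * (8 / ((q - 5) * √π)) + 2 ^ q * (8 * √(3 / π))) * N := by
  have hN0 : 0 ≤ N := by
    obtain ⟨v, hv⟩ := hN.exists
    have := h0 v
    exact (by positivity : 0 ≤ ‖v‖ ^ q * f v).trans hv
  have hM0 : 0 ≤ maxw f (bulk f) := by rw [maxw_bulk hT]; positivity
  have hq5 : 0 < q - 5 := by linarith
  have hslow : 0 ≤ 12 ^ (q / 2) * (8 / ((q - 5) * √π)) * N := by positivity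
  have hfast : 0 ≤ 2 ^ q * (8 * √(3 / π)) * N := by positivity
  by_cases hU : ‖bulk f‖ ≤ √(12 * (2 * temp f))
  · have hUq : ‖bulk f‖ ^ q ≤ 12 ^ (q / 2) * (2 * temp f) ^ (q / 2) := by
      rw [← Real.mul_rpow (by norm_num) (by positivity),
        Real.rpow_div_two_eq_sqrt _ (by positivity)]
      gcongr
    calc ‖bulk f‖ ^ q * maxw f (bulk f)
        ≤ 12 ^ (q / 2) * (2 * temp f) ^ (q / 2) * maxw f (bulk f) := by gcongr
      _ = 12 ^ (q / 2) * (maxw f (bulk f) * (2 * temp f) ^ (q / 2)) := by ring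
      _ ≤ 12 ^ (q / 2) * (8 / ((q - 5) * √π) * N) :=
          mul_le_mul_of_nonneg_left (maxw_bulk_mul_rpow_le hq hm h0 hI hρ hT hN) (by positivity)
      _ ≤ _ := by linarith
  · rw [not_le] at hU
    have hU0 : 0 < ‖bulk f‖ := (Real.sqrt_nonneg _).trans_lt hU
    have hball : ∀ᵐ w, w ∈ ball (bulk f) √(6 * temp f) → f w ≤ 2 ^ q * N / ‖bulk f‖ ^ q := by
      filter_upwards [hN] with w hw hwU
      have hR : √(12 * (2 * temp f)) = 2 * √(6 * temp f) := by
        rw [show 12 * (2 * temp f) = 2 ^ 2 * (6 * temp f) by ring,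
          Real.sqrt_mul (by positivity), Real.sqrt_sq zero_le_two]
      have hwU' : ‖bulk f‖ / 2 ≤ ‖w‖ := by
        rw [mem_ball, dist_eq_norm] at hwU
        linarith [norm_sub_norm_le (bulk f) w, norm_sub_rev w (bulk f)]
      rw [le_div_iff₀ (by positivity)]
      calc f w * ‖bulk f‖ ^ q = 2 ^ q * ((‖bulk f‖ / 2) ^ q * f w) := by
            rw [Real.div_rpow hU0.le zero_le_two]; field_simp
        _ ≤ 2 ^ q * (‖w‖ ^ q * f w) := by gcongr; exact h0 w
        _ ≤ 2 ^ q * N := by gcongr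
    calc ‖bulk f‖ ^ q * maxw f (bulk f)
        ≤ ‖bulk f‖ ^ q * (8 * √(3 / π) * (2 ^ q * N / ‖bulk f‖ ^ q)) := by
          gcongr; exact maxw_bulk_le_of_ae_le_on_ball hm h0 hI hρ hT hball
      _ = 2 ^ q * (8 * √(3 / π)) * N := by field_simp
      _ ≤ _ := by linarith

lemma ae_le_of_ae_one_add_rpow_mul_le {q N : ℝ} (h0 : ∀ v, 0 ≤ f v)
    (hN : ∀ᵐ v, (1 + ‖v‖ ^ q) * f v ≤ N) : ∀ᵐ v, f v ≤ N := by
  filter_upwards [hN] with v hv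
  nlinarith [h0 v, Real.rpow_nonneg (norm_nonneg v) q]

lemma ae_le_toReal_wnorm {q : ℝ} (hw : wnorm q f < ⊤) :
    ∀ᵐ v, (1 + ‖v‖ ^ q) * f v ≤ (wnorm q f).toReal := by
  filter_upwards [ae_le_essSup (f := fun v => ENNReal.ofReal ((1 + ‖v‖ ^ q) * f v))] with v hv
  exact (ENNReal.ofReal_le_iff_le_toReal hw.ne).1 hv

lemma one_add_rpow_mul_maxw_le {q : ℝ} (hq : 5 < q) (hm : Measurable f) (h0 : ∀ v, 0 ≤ f v)
    (hI : Integrable fun v => (1 + ‖v‖ ^ 2) * f v) (hρ : 0 < dens f) (hT : 0 < temp f) {N : ℝ}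
    (hN : ∀ᵐ v, (1 + ‖v‖ ^ q) * f v ≤ N) (v : E3) :
    (1 + ‖v‖ ^ q) * maxw f v ≤
      (8 * √(3 / π) + 2 ^ (q - 1) * ((q / 2 * exp (-1)) ^ (q / 2) * (8 / ((q - 5) * √π))
        + (12 ^ (q / 2) * (8 / ((q - 5) * √π)) + 2 ^ q * (8 * √(3 / π))))) * N := by
  have hNq : ∀ᵐ v, ‖v‖ ^ q * f v ≤ N := by
    filter_upwards [hN] with v hv
    linarith [h0 v]
  have hA0 : 0 ≤ maxw f (bulk f) := by rw [maxw_bulk hT]; positivity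
  have hM0 : 0 ≤ maxw f v := by rw [maxw_eq_mul_exp]; positivity
  have hM := maxw_le_maxw_bulk hρ hT v
  have hgauss : ‖v - bulk f‖ ^ q * maxw f v ≤
      (q / 2 * exp (-1)) ^ (q / 2) * (maxw f (bulk f) * (2 * temp f) ^ (q / 2)) := by
    rw [maxw_eq_mul_exp, mul_left_comm]
    calc maxw f (bulk f) * (‖v - bulk f‖ ^ q * exp (-‖v - bulk f‖ ^ 2 / (2 * temp f)))
        ≤ maxw f (bulk f) * ((q / 2 * exp (-1)) ^ (q / 2) * (2 * temp f) ^ (q / 2)) := by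
          gcongr maxw f (bulk f) * ?_
          exact rpow_mul_exp_neg_sq_div_le (by linarith) (by positivity) (norm_nonneg _)
      _ = _ := by ring
  have hweight : ‖v‖ ^ q ≤ 2 ^ (q - 1) * (‖v - bulk f‖ ^ q + ‖bulk f‖ ^ q) := by
    simpa using norm_add_rpow_le (v - bulk f) (bulk f) (by linarith)
  calc (1 + ‖v‖ ^ q) * maxw f v
      ≤ maxw f v + 2 ^ (q - 1) * (‖v - bulk f‖ ^ q * maxw f v + ‖bulk f‖ ^ q * maxw f v) := by
        nlinarith
    _ ≤ maxw f (bulk f) + 2 ^ (q - 1) * ((q / 2 * exp (-1)) ^ (q / 2) *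
          (maxw f (bulk f) * (2 * temp f) ^ (q / 2)) + ‖bulk f‖ ^ q * maxw f (bulk f)) := by
        gcongr
    _ ≤ 8 * √(3 / π) * N + 2 ^ (q - 1) * ((q / 2 * exp (-1)) ^ (q / 2) *
          (8 / ((q - 5) * √π) * N) +
          (12 ^ (q / 2) * (8 / ((q - 5) * √π)) + 2 ^ q * (8 * √(3 / π))) * N) := by
        gcongr ?_ + 2 ^ (q - 1) * (_ * ?_ + ?_)
        · exact maxw_le_of_ae_le hm h0 hI hρ hT (ae_le_of_ae_one_add_rpow_mul_le h0 hN) _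
        · exact maxw_bulk_mul_rpow_le hq hm h0 hI hρ hT hNq
        · exact norm_bulk_rpow_mul_maxw_bulk_le hq hm h0 hI hρ hT hNq
    _ = _ := by ring

end Maxwellian

/-- For `q = 0` or `q > 5` there is `C_q > 0`, depending only on `q`, such that every
nonnegative `f` with finite weighted `L∞_q` norm, finite second moment, positive density and
positive temperature satisfies `‖𝓜(f)‖_{L∞_q} ≤ C_q ‖f‖_{L∞_q}`, i.e. the pointwise bound
`(1+|v|^q) 𝓜(f)(v) ≤ C_q · ess sup_v (1+|v|^q) f(v)` for all `v`. -/
theorem stmt_1 (q : ℝ) (hq : q = 0 ∨ 5 < q) :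
    ∃ C : ℝ, 0 < C ∧
      ∀ f : E3 → ℝ, Measurable f → (∀ v, 0 ≤ f v) →
        wnorm q f < ⊤ →
        Integrable (fun v => (1 + ‖v‖ ^ 2) * f v) →
        0 < dens f → 0 < temp f →
        ∀ v : E3, (1 + ‖v‖ ^ q) * maxw f v ≤ C * (wnorm q f).toReal := by
  rcases hq with rfl | hq
  · refine ⟨2 * (8 * √(3 / π)), by positivity, fun f hm h0 hw hI hρ hT v => ?_⟩
    rw [Real.rpow_zero, one_add_one_eq_two, mul_assoc]
    gcongr
    exact maxw_le_of_ae_le hm h0 hI hρ hT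
      (ae_le_of_ae_one_add_rpow_mul_le h0 (ae_le_toReal_wnorm hw)) v
  · refine ⟨_, ?_, fun f hm h0 hw hI hρ hT v =>
      one_add_rpow_mul_maxw_le hq hm h0 hI hρ hT (ae_le_toReal_wnorm hw) v⟩
    have : 0 < q := by linarith
    have : 0 < q - 5 := by linarith
    positivity

end
end

section
/- For all x, v ∈ ℝ³ with |x|² ≤ 3, one has ((1+|v|²)^{1/2} / (1+|x|²)^{1/2}) · ( |v|² − (x·v)²/(1+|x|²) ) ≥ |v|³ / 8. In particular, for the test function Φ(x,v) = (1+|v|²)^{1/2} (x·v) / (1+|x|²)^{1/2}, the quantity v·∇_x Φ(x,v) is bounded below by |v|³/8 whenever |x|² ≤ 3. -/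
open scoped RealInnerProductSpace

noncomputable section

/-- For `|x|² ≤ 3`, the transport term of the test function
`Φ(x,v) = (1+|v|²)^{1/2} (x·v)/(1+|x|²)^{1/2}`, namely
`v·∇ₓΦ = (1+|v|²)^{1/2}/(1+|x|²)^{1/2} · (|v|² - (x·v)²/(1+|x|²))`, dominates `|v|³/8`. -/
theorem stmt_11 (x v : E3) (hx : ‖x‖ ^ 2 ≤ 3) :
    ‖v‖ ^ 3 / 8 ≤
      Real.sqrt (1 + ‖v‖ ^ 2) / Real.sqrt (1 + ‖x‖ ^ 2) *
        (‖v‖ ^ 2 - ⟪x, v⟫ ^ 2 / (1 + ‖x‖ ^ 2)) := by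
  have ha0 : (0:ℝ) ≤ ‖x‖ ^ 2 := sq_nonneg _
  have hb0 : (0:ℝ) ≤ ‖v‖ ^ 2 := sq_nonneg _
  have h1a : (0:ℝ) < 1 + ‖x‖ ^ 2 := by linarith
  have hip : ⟪x, v⟫ ^ 2 ≤ ‖x‖ ^ 2 * ‖v‖ ^ 2 := by
    have h := abs_real_inner_le_norm x v
    have h2 : |⟪x, v⟫| ^ 2 ≤ (‖x‖ * ‖v‖) ^ 2 := by
      have := abs_nonneg ⟪x, v⟫
      nlinarith
    calc ⟪x, v⟫ ^ 2 = |⟪x, v⟫| ^ 2 := (sq_abs _).symm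
      _ ≤ (‖x‖ * ‖v‖) ^ 2 := h2
      _ = ‖x‖ ^ 2 * ‖v‖ ^ 2 := by ring
  have hfac : ‖v‖ ^ 2 / 4 ≤ ‖v‖ ^ 2 - ⟪x, v⟫ ^ 2 / (1 + ‖x‖ ^ 2) := by
    have h2 : ⟪x, v⟫ ^ 2 / (1 + ‖x‖ ^ 2) ≤ ‖x‖ ^ 2 * ‖v‖ ^ 2 / (1 + ‖x‖ ^ 2) := by
      gcongr
    have h3 : ‖x‖ ^ 2 * ‖v‖ ^ 2 / (1 + ‖x‖ ^ 2) = ‖v‖ ^ 2 - ‖v‖ ^ 2 / (1 + ‖x‖ ^ 2) := by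
      field_simp
      ring
    have h4 : ‖v‖ ^ 2 / 4 ≤ ‖v‖ ^ 2 / (1 + ‖x‖ ^ 2) := by
      gcongr
      · linarith
    linarith
  have hsa : Real.sqrt (1 + ‖x‖ ^ 2) ≤ 2 := by
    have h1 := Real.sq_sqrt (le_of_lt h1a)
    have h2 := Real.sqrt_nonneg (1 + ‖x‖ ^ 2)
    nlinarith
  have hsa0 : 0 < Real.sqrt (1 + ‖x‖ ^ 2) := Real.sqrt_pos.mpr h1a
  have hsb : ‖v‖ ≤ Real.sqrt (1 + ‖v‖ ^ 2) := by
    have h1 := Real.sq_sqrt (show (0:ℝ) ≤ 1 + ‖v‖ ^ 2 by linarith)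
    have h2 := Real.sqrt_nonneg (1 + ‖v‖ ^ 2)
    nlinarith [norm_nonneg v]
  have hdiv : ‖v‖ / 2 ≤ Real.sqrt (1 + ‖v‖ ^ 2) / Real.sqrt (1 + ‖x‖ ^ 2) :=
    div_le_div₀ (Real.sqrt_nonneg _) hsb hsa0 hsa
  have hmul : ‖v‖ / 2 * (‖v‖ ^ 2 / 4) ≤
      Real.sqrt (1 + ‖v‖ ^ 2) / Real.sqrt (1 + ‖x‖ ^ 2) *
        (‖v‖ ^ 2 - ⟪x, v⟫ ^ 2 / (1 + ‖x‖ ^ 2)) := by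
    apply mul_le_mul hdiv hfac (by positivity)
    positivity
  calc ‖v‖ ^ 3 / 8 = ‖v‖ / 2 * (‖v‖ ^ 2 / 4) := by ring
    _ ≤ _ := hmul

end
end

section
/- Let T > 0, C ≥ 0, let g : [0,T] → [0,∞) be continuous, and let y : [0,T] → [0,∞) be continuously differentiable and satisfy y'(t) + 2 y(t) ≤ C g(t) y(t)^{4/5} for all t ∈ [0,T]. Then for every t ∈ [0,T], y(t) ≤ ( y(0)^{1/5} + (C/5) ∫₀^t g(s) ds )⁵. -/
open MeasureTheory intervalIntegral

/-- Nonlinear Gronwall inequality: if `y ≥ 0` is `C¹` on `[0,T]` with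
`y' + 2y ≤ C g y^{4/5}` for a continuous nonnegative `g`, then
`y(t) ≤ (y(0)^{1/5} + (C/5)∫₀ᵗ g)⁵`. -/
theorem stmt_13 (T C : ℝ) (hT : 0 < T) (hC : 0 ≤ C)
    (g : ℝ → ℝ) (hgc : ContinuousOn g (Set.Icc 0 T)) (hg0 : ∀ t ∈ Set.Icc 0 T, 0 ≤ g t)
    (y y' : ℝ → ℝ) (hy0 : ∀ t ∈ Set.Icc 0 T, 0 ≤ y t)
    (hy : ∀ t ∈ Set.Icc 0 T, HasDerivWithinAt y (y' t) (Set.Icc 0 T) t)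
    (hy'c : ContinuousOn y' (Set.Icc 0 T))
    (hineq : ∀ t ∈ Set.Icc 0 T, y' t + 2 * y t ≤ C * g t * y t ^ ((4 : ℝ) / 5)) :
    ∀ t ∈ Set.Icc 0 T, y t ≤ (y 0 ^ ((1 : ℝ) / 5) + C / 5 * ∫ s in (0 : ℝ)..t, g s) ^ (5 : ℕ) := by
  intro t ht
  have hyc : ContinuousOn y (Set.Icc 0 T) := fun s hs => (hy s hs).continuousWithinAt
  have ht0 : (0:ℝ) ≤ t := ht.1
  have htT : t ≤ T := ht.2
  have hsub : Set.Icc (0:ℝ) t ⊆ Set.Icc 0 T := Set.Icc_subset_Icc le_rfl htT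
  set A : ℝ := C / 5 * ∫ s in (0:ℝ)..t, g s with hA
  have huIcc : Set.uIcc (0:ℝ) t = Set.Icc 0 t := Set.uIcc_of_le ht0
  have hgint : IntervalIntegrable g volume 0 t :=
    (huIcc ▸ (hgc.mono hsub) : ContinuousOn g (Set.uIcc 0 t)).intervalIntegrable
  have hAnn : 0 ≤ A := by
    apply mul_nonneg (by positivity)
    apply intervalIntegral.integral_nonneg ht0
    exact fun s hs => hg0 s (hsub hs)
  -- key estimate for each ε > 0
  have key : ∀ ε : ℝ, 0 < ε → y t ≤ ((y 0 + ε) ^ ((1:ℝ)/5) + A) ^ (5:ℕ) := by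
    intro ε hε
    set F : ℝ → ℝ := fun s => y' s * (1/5) * (y s + ε) ^ ((1:ℝ)/5 - 1) with hF
    have hw : ∀ s ∈ Set.Icc (0:ℝ) T, 0 < y s + ε := fun s hs => by
      have := hy0 s hs; linarith
    have hfc : ContinuousOn (fun s => (y s + ε) ^ ((1:ℝ)/5)) (Set.Icc 0 t) :=
      ((hyc.mono hsub).add continuousOn_const).rpow_const
        (fun x hx => Or.inr (by norm_num))
    have hFc : ContinuousOn F (Set.Icc 0 t) := by
      apply (((hy'c.mono hsub).mul continuousOn_const).mul
        (((hyc.mono hsub).add continuousOn_const).rpow_const ?_))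
      exact fun x hx => Or.inl (hw x (hsub hx)).ne'
    have hFint : IntervalIntegrable F volume 0 t :=
      (huIcc ▸ hFc : ContinuousOn F (Set.uIcc 0 t)).intervalIntegrable
    have hderiv : ∀ x ∈ Set.Ioo (0:ℝ) t, HasDerivWithinAt
        (fun s => (y s + ε) ^ ((1:ℝ)/5)) (F x) (Set.Ioi x) x := by
      intro x hx
      have hxT : x ∈ Set.Icc (0:ℝ) T := ⟨hx.1.le, hx.2.le.trans htT⟩
      have hmem : Set.Icc (0:ℝ) T ∈ nhds x :=
        Icc_mem_nhds hx.1 (lt_of_lt_of_le hx.2 htT)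
      have hdy : HasDerivAt y (y' x) x := (hy x hxT).hasDerivAt hmem
      have : HasDerivAt (fun s => (y s + ε) ^ ((1:ℝ)/5))
          (y' x * ((1:ℝ)/5) * (y x + ε) ^ ((1:ℝ)/5 - 1)) x := by
        have := (hdy.add_const ε).rpow_const (p := (1:ℝ)/5)
          (Or.inl (hw x hxT).ne')
        simpa using this
      exact this.hasDerivWithinAt
    have hftc : ∫ s in (0:ℝ)..t, F s =
        (y t + ε) ^ ((1:ℝ)/5) - (y 0 + ε) ^ ((1:ℝ)/5) :=
      intervalIntegral.integral_eq_sub_of_hasDeriv_right_of_le ht0 hfc hderiv hFint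
    have hptwise : ∀ s ∈ Set.Icc (0:ℝ) t, F s ≤ C / 5 * g s := by
      intro s hs
      have hsT : s ∈ Set.Icc (0:ℝ) T := hsub hs
      have hws : 0 < y s + ε := hw s hsT
      have hys : 0 ≤ y s := hy0 s hsT
      have hgs : 0 ≤ g s := hg0 s hsT
      have h1 : y' s ≤ C * g s * y s ^ ((4:ℝ)/5) := by
        have := hineq s hsT; linarith
      have hab : y s ^ ((4:ℝ)/5) ≤ (y s + ε) ^ ((4:ℝ)/5) :=
        Real.rpow_le_rpow hys (by linarith) (by norm_num)
      have hbpos : 0 < (y s + ε) ^ ((4:ℝ)/5) := Real.rpow_pos_of_pos hws _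
      have hrw : (y s + ε) ^ ((1:ℝ)/5 - 1) = ((y s + ε) ^ ((4:ℝ)/5))⁻¹ := by
        rw [← Real.rpow_neg hws.le]; norm_num
      have hanon : 0 ≤ y s ^ ((4:ℝ)/5) := Real.rpow_nonneg hys _
      have hbb : (y s + ε) ^ ((4:ℝ)/5) * ((y s + ε) ^ ((4:ℝ)/5))⁻¹ = 1 :=
        mul_inv_cancel₀ hbpos.ne'
      have hbinv : 0 < ((y s + ε) ^ ((4:ℝ)/5))⁻¹ := inv_pos.mpr hbpos
      rw [hF]
      simp only [hrw]
      set a := y s ^ ((4:ℝ)/5)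
      set b := (y s + ε) ^ ((4:ℝ)/5)
      calc y' s * (1/5) * b⁻¹ ≤ (C * g s * a) * (1/5) * b⁻¹ := by
            apply mul_le_mul_of_nonneg_right _ hbinv.le
            apply mul_le_mul_of_nonneg_right h1 (by norm_num)
        _ ≤ (C * g s * b) * (1/5) * b⁻¹ := by
            apply mul_le_mul_of_nonneg_right _ hbinv.le
            apply mul_le_mul_of_nonneg_right _ (by norm_num)
            exact mul_le_mul_of_nonneg_left hab (mul_nonneg hC hgs)
        _ = C / 5 * g s * (b * b⁻¹) := by ring
        _ = C / 5 * g s := by rw [hbb, mul_one]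
    have hcgint : IntervalIntegrable (fun s => C / 5 * g s) volume 0 t :=
      hgint.const_mul _
    have hintle : ∫ s in (0:ℝ)..t, F s ≤ ∫ s in (0:ℝ)..t, C / 5 * g s :=
      intervalIntegral.integral_mono_on ht0 hFint hcgint hptwise
    have hintA : ∫ s in (0:ℝ)..t, C / 5 * g s = A := by
      rw [hA, intervalIntegral.integral_const_mul]
    have hmain : (y t + ε) ^ ((1:ℝ)/5) ≤ (y 0 + ε) ^ ((1:ℝ)/5) + A := by
      have := hintle
      rw [hftc, hintA] at this
      linarith
    have hwt : 0 < y t + ε := hw t ht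
    have hpow : ((y t + ε) ^ ((1:ℝ)/5)) ^ (5:ℕ) = y t + ε := by
      rw [← Real.rpow_natCast ((y t + ε) ^ ((1:ℝ)/5)) 5,
        ← Real.rpow_mul hwt.le]
      norm_num
    calc y t ≤ y t + ε := by linarith
      _ = ((y t + ε) ^ ((1:ℝ)/5)) ^ (5:ℕ) := hpow.symm
      _ ≤ ((y 0 + ε) ^ ((1:ℝ)/5) + A) ^ (5:ℕ) :=
          pow_le_pow_left₀ (Real.rpow_nonneg hwt.le _) hmain 5
  -- pass to the limit ε → 0⁺
  have hy00 : 0 ≤ y 0 := hy0 0 ⟨le_rfl, hT.le⟩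
  have htend : Filter.Tendsto (fun ε : ℝ => ((y 0 + ε) ^ ((1:ℝ)/5) + A) ^ (5:ℕ))
      (nhdsWithin 0 (Set.Ioi 0)) (nhds ((y 0 ^ ((1:ℝ)/5) + A) ^ (5:ℕ))) := by
    have h1 : Filter.Tendsto (fun ε : ℝ => y 0 + ε) (nhdsWithin 0 (Set.Ioi 0))
        (nhds (y 0)) := by
      have : Filter.Tendsto (fun ε : ℝ => y 0 + ε) (nhds 0) (nhds (y 0 + 0)) :=
        (continuous_const.add continuous_id).tendsto 0
      simpa using this.mono_left nhdsWithin_le_nhds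
    have h2 : ContinuousAt (fun x : ℝ => x ^ ((1:ℝ)/5)) (y 0) :=
      Real.continuousAt_rpow_const _ _ (Or.inr (by norm_num))
    exact ((h2.tendsto.comp h1).add_const A).pow 5
  exact ge_of_tendsto htend (Filter.eventually_of_mem self_mem_nhdsWithin
    (fun ε hε => key ε hε))
end

section
/- Let (Q, μ) be a measure space and let F, M : Q → (0,∞) be measurable functions with F, M ∈ L¹(μ). Then for every R > 1 and every measurable set B ⊆ Q, ∫_B M dμ ≤ R ∫_B F dμ + (1/ln R) ∫_Q (M − F)(ln M − ln F) dμ, where the last integral is well-defined in [0,∞] since the integrand (M − F)(ln M − ln F) is pointwise nonnegative. -/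
open MeasureTheory
open scoped ENNReal

/-! Pointwise, either `M ≤ R F`, or `ln M - ln F ≥ ln R`, in which case the dissipation
integrand is at least `(M - F) ln R ≥ (M - R F) ln R`. Integrate over `B` and enlarge the
domain of the nonnegative dissipation term to the whole space. -/

namespace Real

theorem sub_mul_log_sub_log_nonneg {a b : ℝ} (ha : 0 < a) (hb : 0 < b) :
    0 ≤ (a - b) * (log a - log b) := by
  rcases le_total b a with hba | hab
  · exact mul_nonneg (sub_nonneg.2 hba) (sub_nonneg.2 (log_le_log hb hba))
  · exact mul_nonneg_of_nonpos_of_nonpos (sub_nonpos.2 hab) (sub_nonpos.2 (log_le_log ha hab))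

theorem le_mul_add_div_log_mul_sub_mul_log_sub_log {R a b : ℝ} (hR : 1 < R) (ha : 0 < a)
    (hb : 0 < b) : a ≤ R * b + 1 / log R * ((a - b) * (log a - log b)) := by
  have hlogR : 0 < log R := log_pos hR
  have hdiss := sub_mul_log_sub_log_nonneg ha hb
  rcases le_or_gt a (R * b) with hRb | hRb
  · have : 0 ≤ 1 / log R * ((a - b) * (log a - log b)) := by positivity
    linarith
  · have hlog : log R ≤ log a - log b := by
      have := log_le_log (by positivity) hRb.le
      rw [log_mul (by positivity) hb.ne'] at this
      linarith
    have hba : 0 ≤ a - b := by nlinarith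
    have : a - b ≤ 1 / log R * ((a - b) * (log a - log b)) := by
      rw [div_mul_eq_mul_div, one_mul, le_div_iff₀ hlogR]
      exact mul_le_mul_of_nonneg_left hlog hba
    nlinarith

end Real

theorem setLIntegral_le_mul_add_mul_lintegral {α : Type*} [MeasurableSpace α] {μ : Measure α}
    {f g h : α → ℝ≥0∞} {a c : ℝ≥0∞} (hg : Measurable g) (hc : c ≠ ∞)
    (hfgh : ∀ x, f x ≤ a * g x + c * h x) (s : Set α) :
    ∫⁻ x in s, f x ∂μ ≤ a * ∫⁻ x in s, g x ∂μ + c * ∫⁻ x, h x ∂μ :=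
  calc ∫⁻ x in s, f x ∂μ ≤ ∫⁻ x in s, a * g x + c * h x ∂μ := lintegral_mono hfgh
    _ = a * ∫⁻ x in s, g x ∂μ + c * ∫⁻ x in s, h x ∂μ := by
      rw [lintegral_add_left (hg.const_mul a), lintegral_const_mul a hg,
        lintegral_const_mul' c h hc]
    _ ≤ a * ∫⁻ x in s, g x ∂μ + c * ∫⁻ x, h x ∂μ := by
      gcongr
      exact Measure.restrict_le_self

theorem stmt_17_general {Q : Type*} [MeasurableSpace Q] (μ : Measure Q)
    (F M : Q → ℝ) (hF : Measurable F)
    (hF0 : ∀ x, 0 < F x) (hM0 : ∀ x, 0 < M x)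
    (R : ℝ) (hR : 1 < R) (B : Set Q) :
    (∫⁻ x in B, ENNReal.ofReal (M x) ∂μ) ≤
      ENNReal.ofReal R * ∫⁻ x in B, ENNReal.ofReal (F x) ∂μ +
      ENNReal.ofReal (1 / Real.log R) *
        ∫⁻ x, ENNReal.ofReal ((M x - F x) * (Real.log (M x) - Real.log (F x))) ∂μ := by
  refine setLIntegral_le_mul_add_mul_lintegral hF.ennreal_ofReal ENNReal.ofReal_ne_top
    (fun x => ?_) B
  have hR0 : 0 ≤ R := by linarith
  have hc0 : 0 ≤ 1 / Real.log R := by have := Real.log_pos hR; positivity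
  have hdiss := Real.sub_mul_log_sub_log_nonneg (hM0 x) (hF0 x)
  rw [← ENNReal.ofReal_mul hR0, ← ENNReal.ofReal_mul hc0,
    ← ENNReal.ofReal_add (mul_nonneg hR0 (hF0 x).le) (mul_nonneg hc0 hdiss)]
  exact ENNReal.ofReal_le_ofReal
    (Real.le_mul_add_div_log_mul_sub_mul_log_sub_log hR (hM0 x) (hF0 x))

/-- Uniform integrability bound: for positive integrable `F, M` and `R > 1`,
`∫_B M ≤ R ∫_B F + (1/ln R) ∫ (M - F)(ln M - ln F)`, the last (pointwise nonnegative)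
integrand being integrated in the sense of the lower integral, with values in `[0,∞]`. -/
theorem stmt_17 {Q : Type*} [MeasurableSpace Q] (μ : Measure Q)
    (F M : Q → ℝ) (hF : Measurable F) (hM : Measurable M)
    (hF0 : ∀ x, 0 < F x) (hM0 : ∀ x, 0 < M x)
    (hFint : Integrable F μ) (hMint : Integrable M μ)
    (R : ℝ) (hR : 1 < R) (B : Set Q) (hB : MeasurableSet B) :
    (∫⁻ x in B, ENNReal.ofReal (M x) ∂μ) ≤
      ENNReal.ofReal R * ∫⁻ x in B, ENNReal.ofReal (F x) ∂μ +
      ENNReal.ofReal (1 / Real.log R) *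
        ∫⁻ x, ENNReal.ofReal ((M x - F x) * (Real.log (M x) - Real.log (F x))) ∂μ :=
  stmt_17_general μ F M hF hF0 hM0 R hR B
end
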